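/- Let G be a group and let α be a tensor commuting automorphism of G. Then α² is a tensor central automorphism of G if and only if α(x) ⊗ α(y) = (y ⊗ x)⁻¹ for all x, y ∈ G. -/

import Mathlib

/-!
Non-abelian tensor square `G ⊗ G`, constructed as the presented group on
symbols `g ⊗ h` with the defining relations
`g*g' ⊗ h = (g^{g'} ⊗ h^{g'}) * (g' ⊗ h)` and
`g ⊗ h*h' = (g ⊗ h') * (g^{h'} ⊗ h^{h'})`, where `a ^ b = b⁻¹ * a * b`.
-/

variable {G : Type*} [Group G]

/-- Defining relations of the non-abelian tensor square `G ⊗ G`. -/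
def tensorRels (G : Type*) [Group G] : Set (FreeGroup (G × G)) :=
  {r | (∃ g g' h : G,
      r = FreeGroup.of (g * g', h) *
        (FreeGroup.of (g'⁻¹ * g * g', g'⁻¹ * h * g') * FreeGroup.of (g', h))⁻¹) ∨
    (∃ g h h' : G,
      r = FreeGroup.of (g, h * h') *
        (FreeGroup.of (g, h') * FreeGroup.of (h'⁻¹ * g * h', h'⁻¹ * h * h'))⁻¹)}

/-- The non-abelian tensor square `G ⊗ G`. -/
abbrev TensorSquare (G : Type*) [Group G] := PresentedGroup (tensorRels G)

/-- The tensor `g ⊗ h` as an element of `G ⊗ G`. -/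
def tmul (g h : G) : TensorSquare G := PresentedGroup.of (g, h)

theorem tensorRels_eq_one {r : FreeGroup (G × G)} (hr : r ∈ tensorRels G) :
    PresentedGroup.mk (tensorRels G) r = 1 :=
  (QuotientGroup.eq_one_iff r).mpr (Subgroup.subset_normalClosure hr)

/-- The first defining relation of `G ⊗ G`. -/
theorem tmul_rel₁ (g g' h : G) :
    tmul (g * g') h = tmul (g'⁻¹ * g * g') (g'⁻¹ * h * g') * tmul g' h := by
  have h1 := tensorRels_eq_one (G := G) (Or.inl ⟨g, g', h, rfl⟩)
  rw [map_mul, map_inv, map_mul, mul_inv_eq_one] at h1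
  exact h1

/-- The second defining relation of `G ⊗ G`. -/
theorem tmul_rel₂ (g h h' : G) :
    tmul g (h * h') = tmul g h' * tmul (h'⁻¹ * g * h') (h'⁻¹ * h * h') := by
  have h1 := tensorRels_eq_one (G := G) (Or.inr ⟨g, h, h', rfl⟩)
  rw [map_mul, map_inv, map_mul, mul_inv_eq_one] at h1
  exact h1

/-- The action of `x : G` on `G ⊗ G`, determined by `(g ⊗ h) ^ x = (x⁻¹*g*x) ⊗ (x⁻¹*h*x)`. -/
def tensorAct (x : G) : TensorSquare G →* TensorSquare G :=
  PresentedGroup.toGroup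
    (f := fun p : G × G => tmul (x⁻¹ * p.1 * x) (x⁻¹ * p.2 * x))
    (by
      rintro r (⟨g, g', h, rfl⟩ | ⟨g, h, h', rfl⟩) <;>
        simp only [map_mul, map_inv, FreeGroup.lift_apply_of, mul_inv_eq_one]
      · have := tmul_rel₁ (x⁻¹ * g * x) (x⁻¹ * g' * x) (x⁻¹ * h * x)
        convert this using 2 <;> group
      · have := tmul_rel₂ (x⁻¹ * g * x) (x⁻¹ * h * x) (x⁻¹ * h' * x)
        convert this using 2 <;> group)

@[simp] theorem tensorAct_tmul (x g h : G) :
    tensorAct x (tmul g h) = tmul (x⁻¹ * g * x) (x⁻¹ * h * x) :=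
  PresentedGroup.toGroup.of _

/-- An automorphism `α` of `G` is tensor commuting if `g ⊗ α g = 1` for all `g`. -/
def IsTensorCommuting (α : G ≃* G) : Prop := ∀ g : G, tmul g (α g) = 1

/-- An automorphism `α` of `G` is tensor central if `[x, α] = x⁻¹ * α x` lies in the
tensor center of `G`, i.e. `(x⁻¹ * α x) ⊗ y = 1` for all `x y`. -/
def IsTensorCentral (α : G ≃* G) : Prop := ∀ x y : G, tmul (x⁻¹ * α x) y = 1

/-- The inner automorphism `T_g : x ↦ x ^ g = g⁻¹ * x * g` of `G` induced by `g`. -/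
def innerAut (g : G) : G ≃* G := MulAut.conj g⁻¹

/-!
A tensor commuting `α` satisfies the polarized identity `(w ⊗ α u)⁻¹ = (u ⊗ α w) ^ (α u * u⁻¹)`,
obtained by expanding `w u ⊗ α (w u) = 1`. The condition `α x ⊗ α y = (y ⊗ x)⁻¹` says that the
map `α ⊗ α` induced by `α` on `G ⊗ G` is the swap homomorphism
`σ : g ⊗ h ↦ (h ⊗ g)⁻¹`.

If `α²` is tensor central, then `α² x ⊗ w = x ⊗ w`, and the polarized identity turns `σ ∘ (α ⊗ α)`
into `u ⊗ v ↦ (u ⊗ v) ^ (α u * u⁻¹)`. Since `σ ∘ (α ⊗ α)` intertwines the actions of `u` and `α u`,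
comparing its values on `u ⊗ v` and on `(u ⊗ v) ^ u = u ⊗ v ^ u`, using that `u` and `α u`
commute, shows that it is the identity.

Conversely, if `α ⊗ α = σ`, then `α z` and `z` act in the same way on `G ⊗ G`, since `α ⊗ α` and
`σ` intertwine the actions of `α z` and `z` respectively. The polarized identity then gives
`α² x ⊗ w = x ⊗ w`, and expanding `x⁻¹ α² x ⊗ y` with the first defining relation
compares it with `x⁻¹ x ⊗ y = 1`.
-/

theorem tensorSquare_hom_ext {K : Type*} [Group K] {f g : TensorSquare G →* K}
    (h : ∀ a b : G, f (tmul a b) = g (tmul a b)) : f = g :=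
  PresentedGroup.ext fun x => h x.1 x.2

def tensorLift {K : Type*} [Group K] (φ : G → G → K)
    (h₁ : ∀ g g' h : G, φ (g * g') h = φ (g'⁻¹ * g * g') (g'⁻¹ * h * g') * φ g' h)
    (h₂ : ∀ g h h' : G, φ g (h * h') = φ g h' * φ (h'⁻¹ * g * h') (h'⁻¹ * h * h')) :
    TensorSquare G →* K :=
  PresentedGroup.toGroup (f := fun p : G × G => φ p.1 p.2) (by
    rintro r (⟨g, g', h, rfl⟩ | ⟨g, h, h', rfl⟩) <;>
      simp only [map_mul, map_inv, FreeGroup.lift_apply_of, mul_inv_eq_one]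
    exacts [h₁ g g' h, h₂ g h h'])

@[simp] theorem tensorLift_tmul {K : Type*} [Group K] (φ : G → G → K) (h₁ h₂) (g h : G) :
    tensorLift φ h₁ h₂ (tmul g h) = φ g h :=
  PresentedGroup.toGroup.of _

theorem one_tmul (h : G) : tmul 1 h = 1 := by
  simpa using tmul_rel₁ (1 : G) 1 h

theorem tmul_mul_left (a b y : G) : tmul (a * b) y = tensorAct b (tmul a y) * tmul b y := by
  rw [tmul_rel₁, tensorAct_tmul]

theorem tmul_mul_left_congr {b c : G} (a : G) {y : G} (hact : tensorAct b = tensorAct c)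
    (hy : tmul b y = tmul c y) : tmul (a * b) y = tmul (a * c) y := by
  rw [tmul_mul_left, tmul_mul_left, hact, hy]

theorem tensorAct_mul (z w : G) : tensorAct (z * w) = (tensorAct w).comp (tensorAct z) :=
  tensorSquare_hom_ext fun a b => by
    simp only [MonoidHom.comp_apply, tensorAct_tmul, mul_inv_rev]
    congr 1 <;> group

theorem tensorAct_mul_apply (z w : G) (c : TensorSquare G) :
    tensorAct (z * w) c = tensorAct w (tensorAct z c) := by
  rw [tensorAct_mul, MonoidHom.comp_apply]

theorem tensorAct_of_mem_center {z : G} (hz : z ∈ Subgroup.center G) :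
    tensorAct z = MonoidHom.id (TensorSquare G) :=
  tensorSquare_hom_ext fun a b => by
    rw [tensorAct_tmul, mul_assoc, mul_assoc, Subgroup.mem_center_iff.mp hz a,
      Subgroup.mem_center_iff.mp hz b, inv_mul_cancel_left, inv_mul_cancel_left,
      MonoidHom.id_apply]

theorem tensorAct_one : tensorAct (1 : G) = MonoidHom.id (TensorSquare G) :=
  tensorAct_of_mem_center (Subgroup.one_mem _)

theorem tensorAct_inv_apply (z : G) (c : TensorSquare G) : tensorAct z⁻¹ (tensorAct z c) = c := by
  rw [← tensorAct_mul_apply, mul_inv_cancel, tensorAct_one, MonoidHom.id_apply]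

theorem tensorAct_inv_mul_apply (z w : G) (c : TensorSquare G) :
    tensorAct (z⁻¹ * w) (tensorAct z c) = tensorAct w c := by
  rw [← tensorAct_mul_apply, mul_inv_cancel_left]

theorem tensorAct_injective (z : G) : Function.Injective (tensorAct z) :=
  Function.LeftInverse.injective (g := tensorAct z⁻¹) (tensorAct_inv_apply z)

def tensorCommutator : TensorSquare G →* G :=
  tensorLift (fun g h => g⁻¹ * h⁻¹ * g * h) (by intros; group) (by intros; group)

theorem commute_of_tmul_eq_one {a b : G} (h : tmul a b = 1) : Commute a b := by
  have hκ : a⁻¹ * b⁻¹ * a * b = 1 := by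
    simpa [tensorCommutator] using congr(tensorCommutator $h)
  calc a * b = b * a * (a⁻¹ * b⁻¹ * a * b) := by group
    _ = b * a := by rw [hκ, mul_one]

def tensorSwap : TensorSquare G →* TensorSquare G :=
  tensorLift (fun g h => (tmul h g)⁻¹)
    (fun g g' h => by rw [tmul_rel₂, mul_inv_rev])
    (fun g h h' => by rw [tmul_rel₁, mul_inv_rev])

@[simp] theorem tensorSwap_tmul (g h : G) : tensorSwap (tmul g h) = (tmul h g)⁻¹ :=
  tensorLift_tmul _ _ _ g h

theorem tensorSwap_tensorAct (z : G) (c : TensorSquare G) :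
    tensorSwap (tensorAct z c) = tensorAct z (tensorSwap c) :=
  DFunLike.congr_fun (tensorSquare_hom_ext (f := tensorSwap.comp (tensorAct z))
    (g := (tensorAct z).comp tensorSwap) fun a b => by simp) c

def tensorMap {H : Type*} [Group H] (f : G →* H) : TensorSquare G →* TensorSquare H :=
  tensorLift (fun g h => tmul (f g) (f h))
    (fun g g' h => by simpa only [map_mul, map_inv] using tmul_rel₁ (f g) (f g') (f h))
    (fun g h h' => by simpa only [map_mul, map_inv] using tmul_rel₂ (f g) (f h) (f h'))

@[simp] theorem tensorMap_tmul {H : Type*} [Group H] (f : G →* H) (g h : G) :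
    tensorMap f (tmul g h) = tmul (f g) (f h) :=
  tensorLift_tmul _ _ _ g h

theorem tensorMap_tensorAct {H : Type*} [Group H] (f : G →* H) (z : G) (c : TensorSquare G) :
    tensorMap f (tensorAct z c) = tensorAct (f z) (tensorMap f c) :=
  DFunLike.congr_fun (tensorSquare_hom_ext (f := (tensorMap f).comp (tensorAct z))
    (g := (tensorAct (f z)).comp (tensorMap f)) fun a b => by simp) c

theorem tensorMap_eq_tensorSwap_iff (α : G ≃* G) :
    tensorMap α.toMonoidHom = tensorSwap ↔ ∀ x y : G, tmul (α x) (α y) = (tmul y x)⁻¹ := by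
  refine ⟨fun h x y => by simpa using congr($h (tmul x y)), fun h => ?_⟩
  exact tensorSquare_hom_ext fun x y => by simpa using h x y

theorem tensorAct_apply_eq_of_tensorMap_eq_tensorSwap {α : G ≃* G}
    (h : tensorMap α.toMonoidHom = tensorSwap) (z : G) : tensorAct (α z) = tensorAct z :=
  tensorSquare_hom_ext fun a b => by
    obtain ⟨c, hc⟩ : ∃ c, tensorMap α.toMonoidHom c = tmul a b :=
      ⟨tmul (α.symm a) (α.symm b), by simp⟩
    rw [← hc, ← MulEquiv.coe_toMonoidHom, ← tensorMap_tensorAct, h, tensorSwap_tensorAct, ← h]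

theorem MulAut.sq_apply (α : G ≃* G) (x : G) : (α ^ 2) x = α (α x) := by
  rw [sq, MulAut.mul_apply]

section TensorCommuting

variable {α : G ≃* G}

theorem IsTensorCommuting.commute (hα : IsTensorCommuting α) (x : G) : Commute x (α x) :=
  commute_of_tmul_eq_one (hα x)

theorem IsTensorCommuting.inv_tmul_eq (hα : IsTensorCommuting α) (w u : G) :
    (tmul w (α u))⁻¹ = tensorAct (α u * u⁻¹) (tmul u (α w)) := by
  have h := hα (w * u)
  rw [map_mul, tmul_rel₂, tmul_mul_left, hα u, mul_one, ← tensorAct_tmul, tmul_mul_left, hα w,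
    map_one, one_mul] at h
  rw [tensorAct_mul_apply, ← inv_eq_of_mul_eq_one_right h, map_inv, tensorAct_inv_apply]

theorem IsTensorCommuting.tensorMap_eq_tensorSwap (hα : IsTensorCommuting α)
    (hS : ∀ x w : G, tmul (α (α x)) w = tmul x w) : tensorMap α.toMonoidHom = tensorSwap := by
  have hV : ∀ u v : G, tensorSwap (tensorMap α.toMonoidHom (tmul u v))
      = tensorAct (α u * u⁻¹) (tmul u v) := by
    intro u v
    obtain ⟨w, rfl⟩ := α.surjective v
    simp only [tensorMap_tmul, MulEquiv.coe_toMonoidHom, tensorSwap_tmul, hS, hα.inv_tmul_eq]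
  have hfix : ∀ u v : G, tensorSwap (tensorMap α.toMonoidHom (tmul u v)) = tmul u v := by
    intro u v
    have hconj : tensorAct u (tmul u v) = tmul u (u⁻¹ * v * u) := by simp
    apply tensorAct_injective (α u)
    calc tensorAct (α u) (tensorSwap (tensorMap α.toMonoidHom (tmul u v)))
        = tensorSwap (tensorMap α.toMonoidHom (tensorAct u (tmul u v))) := by
          rw [tensorMap_tensorAct, tensorSwap_tensorAct, MulEquiv.coe_toMonoidHom]
      _ = tensorAct (α u * u⁻¹) (tensorAct u (tmul u v)) := by
          rw [hconj, hV]
      _ = tensorAct (α u) (tmul u v) := by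
          rw [← (hα.commute u).inv_left.eq, tensorAct_inv_mul_apply]
  rw [tensorMap_eq_tensorSwap_iff]
  intro x y
  simpa [inv_eq_iff_eq_inv] using hfix y x

theorem IsTensorCommuting.tmul_apply_apply_left (hα : IsTensorCommuting α)
    (h : tensorMap α.toMonoidHom = tensorSwap) (x w : G) : tmul (α (α x)) w = tmul x w := by
  calc tmul (α (α x)) w = tmul (α (α x)) (α (α.symm w)) := by rw [α.apply_symm_apply]
    _ = (tmul (α.symm w) (α x))⁻¹ := (tensorMap_eq_tensorSwap_iff α).mp h _ _
    _ = tensorAct (α x * x⁻¹) (tmul x w) := by rw [hα.inv_tmul_eq, α.apply_symm_apply]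
    _ = tmul x w := by
        rw [tensorAct_mul_apply, tensorAct_apply_eq_of_tensorMap_eq_tensorSwap h,
          tensorAct_inv_apply]

theorem tmul_apply_apply_left_of_isTensorCentral_sq (h : IsTensorCentral (α ^ 2)) (x w : G) :
    tmul (α (α x)) w = tmul x w := by
  have hc : x⁻¹ * α (α x) ∈ Subgroup.center G := Subgroup.mem_center_iff.mpr fun g =>
    (commute_of_tmul_eq_one (MulAut.sq_apply α x ▸ h x g)).symm.eq
  calc tmul (α (α x)) w = tmul (x * (x⁻¹ * α (α x))) w := by rw [mul_inv_cancel_left]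
    _ = tmul (x * 1) w :=
        tmul_mul_left_congr x (by rw [tensorAct_of_mem_center hc, tensorAct_one])
          (by rw [← MulAut.sq_apply, h x w, one_tmul])
    _ = tmul x w := by rw [mul_one]

theorem isTensorCentral_sq_of (hS : ∀ x w : G, tmul (α (α x)) w = tmul x w)
    (hact : ∀ z : G, tensorAct (α z) = tensorAct z) : IsTensorCentral (α ^ 2) := fun x y => by
  rw [MulAut.sq_apply, tmul_mul_left_congr x⁻¹ (by rw [hact, hact]) (hS x y), inv_mul_cancel,
    one_tmul]

end TensorCommuting

/-- If `α` is a tensor commuting automorphism of `G`, then `α²` is tensor central iff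
`α x ⊗ α y = (y ⊗ x)⁻¹` for all `x y ∈ G`. -/
theorem stmt_15 (G : Type*) [Group G] (α : G ≃* G) (hα : IsTensorCommuting α) :
    IsTensorCentral (α ^ 2) ↔ ∀ x y : G, tmul (α x) (α y) = (tmul y x)⁻¹ := by
  rw [← tensorMap_eq_tensorSwap_iff]
  exact ⟨fun h => hα.tensorMap_eq_tensorSwap (tmul_apply_apply_left_of_isTensorCentral_sq h),
    fun h => isTensorCentral_sq_of (hα.tmul_apply_apply_left h)
      (tensorAct_apply_eq_of_tensorMap_eq_tensorSwap h)⟩
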